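/- arXiv:2406.09932 — 4 statements merged into one kernel-verified Lean document; each statement's English description precedes it below -/
import Mathlib

section
/- Let K be a real symmetric positive definite n×n matrix, λ > 0, y ∈ ℝⁿ, and let e : Fin m → Fin n be injective, with K_CC := K∘(e,e), K_XC := K∘(id,e), K_CX := (K_XC)ᵀ, and Q := K_XC K_CC⁻¹ K_CX. Define α := (K + λI)⁻¹ y, β := (K_CX K_XC + λ K_CC)⁻¹ K_CX y, and let δ := α − ι(β) ∈ ℝⁿ, where ι extends β by zero (placing βⱼ at index e(j)). Then δᵀ K δ ≤ 2 · tr(K − Q) · ‖y‖² / λ². -/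
open Matrix

noncomputable section

/-- The `n × m` matrix `K_XC` of kernel evaluations between all points and control points. -/
def KXC {n m : ℕ} (K : Matrix (Fin n) (Fin n) ℝ) (e : Fin m → Fin n) :
    Matrix (Fin n) (Fin m) ℝ :=
  K.submatrix id e

/-- The `m × m` control-point kernel matrix `K_CC`. -/
def KCC {n m : ℕ} (K : Matrix (Fin n) (Fin n) ℝ) (e : Fin m → Fin n) :
    Matrix (Fin m) (Fin m) ℝ :=
  K.submatrix e e

/-- The `m × n` matrix `K_CX = (K_XC)ᵀ`. -/
def KCX {n m : ℕ} (K : Matrix (Fin n) (Fin n) ℝ) (e : Fin m → Fin n) :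
    Matrix (Fin m) (Fin n) ℝ :=
  (KXC K e)ᵀ

/-- The Nyström approximation `Q = K_XC ⬝ K_CC⁻¹ ⬝ K_CX` of `K` based on control indices `e`. -/
def nystrom {n m : ℕ} (K : Matrix (Fin n) (Fin n) ℝ) (e : Fin m → Fin n) :
    Matrix (Fin n) (Fin n) ℝ :=
  KXC K e * (KCC K e)⁻¹ * KCX K e

end


/-!
Both coefficient vectors minimise the kernel ridge objective `J f = ‖y - K f‖² + λ fᵀ K f`:
`α` over all of `ℝⁿ` and `S β` over the range of the selection matrix `S`. As `J` is quadratic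
with minimiser `α`, `J f - J α = ‖K (α - f)‖² + λ (α - f)ᵀ K (α - f)`. Comparing `S β` with
the `K`-orthogonal projection `P α` of `α` onto the range of `S` gives
`λ δᵀ K δ ≤ ‖R α‖² + λ αᵀ R α`, where `R = K - K P = (1 - P)ᵀ K (1 - P)` is the positive
semidefinite Nyström residual `K - Q`. Finally `R² ≤ tr R • R`, `R ≤ tr R • 1` and
`λ αᵀ K α + λ² ‖α‖² ≤ ‖y‖²` yield `λ² δᵀ K δ ≤ tr R ‖y‖²`.
-/

namespace Matrix

variable {ι κ : Type*} [Fintype ι] [Fintype κ]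

lemma mulVec_nonsing_inv_mulVec [DecidableEq ι] {A : Matrix ι ι ℝ} (hA : IsUnit A.det)
    (v : ι → ℝ) : A *ᵥ (A⁻¹ *ᵥ v) = v := by
  rw [mulVec_mulVec, mul_nonsing_inv _ hA, one_mulVec]

lemma IsSymm.mulVec_dotProduct {K : Matrix ι ι ℝ} (hK : K.IsSymm) (u w : ι → ℝ) :
    (K *ᵥ u) ⬝ᵥ w = u ⬝ᵥ (K *ᵥ w) := by
  rw [dotProduct_mulVec, ← mulVec_transpose, hK.eq]

lemma dotProduct_transpose_mul_self_mulVec (B : Matrix κ ι ℝ) (v : ι → ℝ) :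
    v ⬝ᵥ ((Bᵀ * B) *ᵥ v) = (B *ᵥ v) ⬝ᵥ (B *ᵥ v) := by
  rw [← mulVec_mulVec, dotProduct_mulVec, vecMul_transpose, dotProduct_comm]

lemma dotProduct_transpose_mul_mul_mulVec (K : Matrix κ κ ℝ) (B : Matrix κ ι ℝ) (v : ι → ℝ) :
    v ⬝ᵥ ((Bᵀ * K * B) *ᵥ v) = (B *ᵥ v) ⬝ᵥ (K *ᵥ (B *ᵥ v)) := by
  rw [← mulVec_mulVec, ← mulVec_mulVec, dotProduct_mulVec, vecMul_transpose]

lemma mulVec_dotProduct_mulVec_le_trace_mul_transpose (B : Matrix κ ι ℝ) (v : ι → ℝ) :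
    (B *ᵥ v) ⬝ᵥ (B *ᵥ v) ≤ (B * Bᵀ).trace * (v ⬝ᵥ v) := by
  have hrow : ∀ k, (B *ᵥ v) k * (B *ᵥ v) k ≤ (B k ⬝ᵥ B k) * (v ⬝ᵥ v) := fun k => by
    simpa [mulVec, dotProduct, sq] using Finset.sum_mul_sq_le_sq_mul_sq Finset.univ (B k) v
  calc (B *ᵥ v) ⬝ᵥ (B *ᵥ v) ≤ ∑ k, (B k ⬝ᵥ B k) * (v ⬝ᵥ v) := Finset.sum_le_sum fun k _ => hrow k
    _ = (B * Bᵀ).trace * (v ⬝ᵥ v) := by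
      simp only [← Finset.sum_mul, trace, diag, mul_apply, transpose_apply, dotProduct]

open scoped MatrixOrder in
lemma PosSemidef.exists_eq_transpose_mul_self {R : Matrix ι ι ℝ} (hR : R.PosSemidef) :
    ∃ B : Matrix ι ι ℝ, R = Bᵀ * B := by
  classical
  obtain ⟨B, rfl⟩ := CStarAlgebra.nonneg_iff_eq_star_mul_self.mp hR.nonneg
  exact ⟨B, by rw [star_eq_conjTranspose, conjTranspose_eq_transpose_of_trivial]⟩

lemma PosSemidef.dotProduct_mulVec_le_trace_mul {R : Matrix ι ι ℝ} (hR : R.PosSemidef)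
    (v : ι → ℝ) : v ⬝ᵥ (R *ᵥ v) ≤ R.trace * (v ⬝ᵥ v) := by
  obtain ⟨B, rfl⟩ := hR.exists_eq_transpose_mul_self
  rw [dotProduct_transpose_mul_self_mulVec, trace_mul_comm]
  exact mulVec_dotProduct_mulVec_le_trace_mul_transpose B v

lemma PosSemidef.mulVec_dotProduct_mulVec_le_trace_mul {R : Matrix ι ι ℝ} (hR : R.PosSemidef)
    (v : ι → ℝ) : (R *ᵥ v) ⬝ᵥ (R *ᵥ v) ≤ R.trace * (v ⬝ᵥ (R *ᵥ v)) := by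
  obtain ⟨B, rfl⟩ := hR.exists_eq_transpose_mul_self
  have hBBt : (B * Bᵀ).PosSemidef := by
    simpa [conjTranspose_eq_transpose_of_trivial] using posSemidef_self_mul_conjTranspose B
  calc ((Bᵀ * B) *ᵥ v) ⬝ᵥ ((Bᵀ * B) *ᵥ v) = (B *ᵥ v) ⬝ᵥ ((B * Bᵀ) *ᵥ (B *ᵥ v)) := by
        rw [← mulVec_mulVec, ← mulVec_mulVec, dotProduct_mulVec (B *ᵥ v), ← mulVec_transpose]
    _ ≤ (B * Bᵀ).trace * ((B *ᵥ v) ⬝ᵥ (B *ᵥ v)) := hBBt.dotProduct_mulVec_le_trace_mul _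
    _ = (Bᵀ * B).trace * (v ⬝ᵥ ((Bᵀ * B) *ᵥ v)) := by
      rw [trace_mul_comm, dotProduct_transpose_mul_self_mulVec]

end Matrix

section Ridge

variable {ι κ : Type*} [Fintype ι] [Fintype κ] {K : Matrix ι ι ℝ} {lam : ℝ} {y : ι → ℝ}

def ridgeLoss (K : Matrix ι ι ℝ) (lam : ℝ) (y f : ι → ℝ) : ℝ :=
  (y - K *ᵥ f) ⬝ᵥ (y - K *ᵥ f) + lam * (f ⬝ᵥ (K *ᵥ f))

/-- For symmetric `K`, the gradient of `ridgeLoss K lam y` at `f` is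
`-2 K (ridgeResidual K lam y f)`. -/
def ridgeResidual (K : Matrix ι ι ℝ) (lam : ℝ) (y f : ι → ℝ) : ι → ℝ :=
  y - K *ᵥ f - lam • f

lemma ridgeResidual_inv_mulVec [DecidableEq ι] (hA : IsUnit (K + lam • (1 : Matrix ι ι ℝ)).det) :
    ridgeResidual K lam y ((K + lam • (1 : Matrix ι ι ℝ))⁻¹ *ᵥ y) = 0 := by
  have h := mulVec_nonsing_inv_mulVec hA y
  rw [add_mulVec, smul_mulVec, one_mulVec] at h
  rw [ridgeResidual, sub_sub, h, sub_self]

lemma ridgeLoss_add (hK : K.IsSymm) {f d : ι → ℝ}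
    (hfd : (K *ᵥ d) ⬝ᵥ ridgeResidual K lam y f = 0) :
    ridgeLoss K lam y (f + d) =
      ridgeLoss K lam y f + ((K *ᵥ d) ⬝ᵥ (K *ᵥ d) + lam * (d ⬝ᵥ (K *ᵥ d))) := by
  have hres : y - K *ᵥ (f + d) = (y - K *ᵥ f) - K *ᵥ d := by
    rw [mulVec_add, sub_add_eq_sub_sub]
  have hsymm : f ⬝ᵥ (K *ᵥ d) = d ⬝ᵥ (K *ᵥ f) := by
    rw [← hK.mulVec_dotProduct, dotProduct_comm]
  rw [ridgeResidual, dotProduct_sub, dotProduct_smul, hK.mulVec_dotProduct d f,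
    smul_eq_mul] at hfd
  unfold ridgeLoss
  rw [hres]
  generalize y - K *ᵥ f = r at hfd ⊢
  simp only [mulVec_add, dotProduct_add, add_dotProduct, sub_dotProduct, dotProduct_sub,
    dotProduct_comm r (K *ᵥ d), hsymm]
  linear_combination (-2) * hfd

lemma ridgeLoss_le_add (hK : K.PosSemidef) (hlam : 0 ≤ lam) {f d : ι → ℝ}
    (hfd : (K *ᵥ d) ⬝ᵥ ridgeResidual K lam y f = 0) :
    ridgeLoss K lam y f ≤ ridgeLoss K lam y (f + d) := by
  rw [ridgeLoss_add (isHermitian_iff_isSymm.mp hK.isHermitian) hfd, le_add_iff_nonneg_right]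
  have hKd : 0 ≤ d ⬝ᵥ (K *ᵥ d) := hK.dotProduct_mulVec_nonneg d
  have hKdKd : 0 ≤ (K *ᵥ d) ⬝ᵥ (K *ᵥ d) := dotProduct_self_star_nonneg _
  positivity

lemma ridgeLoss_eq_of_ridgeResidual_eq_zero (hK : K.IsSymm) {α : ι → ℝ}
    (hα : ridgeResidual K lam y α = 0) (f : ι → ℝ) :
    ridgeLoss K lam y f = ridgeLoss K lam y α +
      ((K *ᵥ (α - f)) ⬝ᵥ (K *ᵥ (α - f)) + lam * ((α - f) ⬝ᵥ (K *ᵥ (α - f)))) := by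
  have h := ridgeLoss_add hK (d := f - α) (by rw [hα, dotProduct_zero])
  rwa [add_sub_cancel, ← neg_sub α f, mulVec_neg, neg_dotProduct, dotProduct_neg, neg_neg,
    neg_dotProduct, dotProduct_neg, neg_neg] at h

lemma ridgeLoss_mulVec_le (hK : K.PosSemidef) (hlam : 0 ≤ lam) {S : Matrix ι κ ℝ} {β : κ → ℝ}
    (hβ : Sᵀ *ᵥ (K *ᵥ ridgeResidual K lam y (S *ᵥ β)) = 0) (c : κ → ℝ) :
    ridgeLoss K lam y (S *ᵥ β) ≤ ridgeLoss K lam y (S *ᵥ c) := by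
  have hfd : (K *ᵥ (S *ᵥ (c - β))) ⬝ᵥ ridgeResidual K lam y (S *ᵥ β) = 0 := by
    rw [(isHermitian_iff_isSymm.mp hK.isHermitian).mulVec_dotProduct, ← vecMul_transpose,
      ← dotProduct_mulVec, hβ, dotProduct_zero]
  simpa [← mulVec_add] using ridgeLoss_le_add hK hlam hfd

lemma lam_mul_dotProduct_mulVec_add_le_of_ridgeResidual_eq_zero (hK : K.PosSemidef)
    (hlam : 0 ≤ lam) {α : ι → ℝ} (hα : ridgeResidual K lam y α = 0) :
    lam * (α ⬝ᵥ (K *ᵥ α)) + lam ^ 2 * (α ⬝ᵥ α) ≤ y ⬝ᵥ y := by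
  obtain rfl : y = K *ᵥ α + lam • α := by rw [← sub_eq_zero, ← hα, ridgeResidual]; abel
  have hKα : 0 ≤ α ⬝ᵥ (K *ᵥ α) := hK.dotProduct_mulVec_nonneg α
  have hKαKα : 0 ≤ (K *ᵥ α) ⬝ᵥ (K *ᵥ α) := dotProduct_self_star_nonneg _
  have hsymm := (isHermitian_iff_isSymm.mp hK.isHermitian).mulVec_dotProduct α α
  simp only [add_dotProduct, dotProduct_add, smul_dotProduct, dotProduct_smul, smul_eq_mul, hsymm]
  nlinarith

end Ridge

namespace Matrix

variable {ι κ : Type*} [Fintype ι] [Fintype κ] {K : Matrix ι ι ℝ} {S : Matrix ι κ ℝ}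

lemma posDef_transpose_mul_mul_add_smul (hK : K.PosSemidef) (hG : (Sᵀ * K * S).PosDef)
    {lam : ℝ} (hlam : 0 < lam) : (Sᵀ * K * (K * S) + lam • (Sᵀ * K * S)).PosDef := by
  have hKK : Sᵀ * K * (K * S) = (K * S)ᴴ * (K * S) := by
    rw [conjTranspose_eq_transpose_of_trivial, transpose_mul,
      (isHermitian_iff_isSymm.mp hK.isHermitian).eq]
  rw [hKK]
  exact PosDef.posSemidef_add (posSemidef_conjTranspose_mul_self _) (hG.smul hlam)

variable [DecidableEq κ]

/-- The `K`-orthogonal projection onto the range of `S`. -/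
noncomputable def nystromProj (K : Matrix ι ι ℝ) (S : Matrix ι κ ℝ) : Matrix ι ι ℝ :=
  S * (Sᵀ * K * S)⁻¹ * (Sᵀ * K)

lemma nystromProj_mulVec (v : ι → ℝ) :
    nystromProj K S *ᵥ v = S *ᵥ (((Sᵀ * K * S)⁻¹ * (Sᵀ * K)) *ᵥ v) := by
  rw [nystromProj, mulVec_mulVec, Matrix.mul_assoc]

lemma transpose_nystromProj_mul (hK : K.IsSymm) :
    (nystromProj K S)ᵀ * K = K * nystromProj K S := by
  simp only [nystromProj, transpose_mul, transpose_nonsing_inv, transpose_transpose, hK.eq,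
    Matrix.mul_assoc]

lemma nystromProj_mul_self (hG : IsUnit (Sᵀ * K * S).det) :
    nystromProj K S * nystromProj K S = nystromProj K S := by
  calc nystromProj K S * nystromProj K S
      = S * (Sᵀ * K * S)⁻¹ * ((Sᵀ * K * S) * (Sᵀ * K * S)⁻¹) * (Sᵀ * K) := by
        simp only [nystromProj, Matrix.mul_assoc]
    _ = nystromProj K S := by rw [mul_nonsing_inv _ hG, Matrix.mul_one, nystromProj]

lemma posSemidef_mul_nystromProj (hK : K.PosSemidef) (hG : IsUnit (Sᵀ * K * S).det) :
    (K * nystromProj K S).PosSemidef := by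
  have hPKP : (nystromProj K S)ᵀ * K * nystromProj K S = K * nystromProj K S := by
    rw [transpose_nystromProj_mul (isHermitian_iff_isSymm.mp hK.isHermitian), Matrix.mul_assoc,
      nystromProj_mul_self hG]
  rw [← hPKP, ← conjTranspose_eq_transpose_of_trivial]
  exact hK.conjTranspose_mul_mul_same _

variable [DecidableEq ι]

lemma transpose_one_sub_nystromProj_mul_mul (hK : K.IsSymm) (hG : IsUnit (Sᵀ * K * S).det) :
    (1 - nystromProj K S)ᵀ * K * (1 - nystromProj K S) = K - K * nystromProj K S := by
  simp only [transpose_sub, transpose_one, Matrix.sub_mul, Matrix.mul_sub, Matrix.one_mul,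
    Matrix.mul_one, transpose_nystromProj_mul hK, Matrix.mul_assoc, nystromProj_mul_self hG]
  abel

lemma posSemidef_sub_mul_nystromProj (hK : K.PosSemidef) (hG : IsUnit (Sᵀ * K * S).det) :
    (K - K * nystromProj K S).PosSemidef := by
  rw [← transpose_one_sub_nystromProj_mul_mul (isHermitian_iff_isSymm.mp hK.isHermitian) hG,
    ← conjTranspose_eq_transpose_of_trivial]
  exact hK.conjTranspose_mul_mul_same _

end Matrix

lemma transpose_mulVec_mulVec_ridgeResidual_eq_zero {ι κ : Type*} [Fintype ι] [Fintype κ]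
    [DecidableEq κ] {K : Matrix ι ι ℝ} {S : Matrix ι κ ℝ} {lam : ℝ} {y : ι → ℝ}
    (hB : IsUnit (Sᵀ * K * (K * S) + lam • (Sᵀ * K * S)).det) :
    Sᵀ *ᵥ (K *ᵥ ridgeResidual K lam y
      (S *ᵥ ((Sᵀ * K * (K * S) + lam • (Sᵀ * K * S))⁻¹ *ᵥ ((Sᵀ * K) *ᵥ y)))) = 0 := by
  set β := (Sᵀ * K * (K * S) + lam • (Sᵀ * K * S))⁻¹ *ᵥ ((Sᵀ * K) *ᵥ y)
  calc _ = (Sᵀ * K) *ᵥ y - (Sᵀ * K * (K * S) + lam • (Sᵀ * K * S)) *ᵥ β := by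
        simp only [ridgeResidual, mulVec_sub, mulVec_add, mulVec_smul, add_mulVec, smul_mulVec,
          mulVec_mulVec, Matrix.mul_assoc, sub_sub]
    _ = 0 := by rw [mulVec_nonsing_inv_mulVec hB, sub_self]

theorem sketched_ridge_error_le_trace {ι κ : Type*} [Fintype ι] [Fintype κ] [DecidableEq ι]
    [DecidableEq κ] {K : Matrix ι ι ℝ} {S : Matrix ι κ ℝ} {lam : ℝ} {y : ι → ℝ}
    {α : ι → ℝ} {β : κ → ℝ} (hK : K.PosSemidef) (hG : IsUnit (Sᵀ * K * S).det) (hlam : 0 ≤ lam)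
    (hα : ridgeResidual K lam y α = 0)
    (hβ : Sᵀ *ᵥ (K *ᵥ ridgeResidual K lam y (S *ᵥ β)) = 0) :
    lam ^ 2 * ((α - S *ᵥ β) ⬝ᵥ (K *ᵥ (α - S *ᵥ β))) ≤
      (K - K * nystromProj K S).trace * (y ⬝ᵥ y) := by
  set R := K - K * nystromProj K S
  have hKsymm := isHermitian_iff_isSymm.mp hK.isHermitian
  have hR : R.PosSemidef := posSemidef_sub_mul_nystromProj hK hG
  have hα_proj : α - nystromProj K S *ᵥ α = (1 - nystromProj K S) *ᵥ α := by
    rw [sub_mulVec, one_mulVec]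
  have hKα_proj : K *ᵥ (α - nystromProj K S *ᵥ α) = R *ᵥ α := by
    rw [hα_proj, mulVec_mulVec, Matrix.mul_sub, Matrix.mul_one]
  have hα_proj_quad : (α - nystromProj K S *ᵥ α) ⬝ᵥ (K *ᵥ (α - nystromProj K S *ᵥ α)) =
      α ⬝ᵥ (R *ᵥ α) := by
    rw [hα_proj, ← dotProduct_transpose_mul_mul_mulVec,
      transpose_one_sub_nystromProj_mul_mul hKsymm hG]
  have hcompare : (K *ᵥ (α - S *ᵥ β)) ⬝ᵥ (K *ᵥ (α - S *ᵥ β)) +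
      lam * ((α - S *ᵥ β) ⬝ᵥ (K *ᵥ (α - S *ᵥ β))) ≤
        (R *ᵥ α) ⬝ᵥ (R *ᵥ α) + lam * (α ⬝ᵥ (R *ᵥ α)) := by
    have h := ridgeLoss_mulVec_le hK hlam hβ (((Sᵀ * K * S)⁻¹ * (Sᵀ * K)) *ᵥ α)
    rwa [← nystromProj_mulVec, ridgeLoss_eq_of_ridgeResidual_eq_zero hKsymm hα,
      ridgeLoss_eq_of_ridgeResidual_eq_zero hKsymm hα (nystromProj K S *ᵥ α), hα_proj_quad,
      hKα_proj, add_le_add_iff_left] at h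
  have hRK : α ⬝ᵥ (R *ᵥ α) ≤ α ⬝ᵥ (K *ᵥ α) := by
    have hQ : 0 ≤ α ⬝ᵥ ((K * nystromProj K S) *ᵥ α) :=
      (posSemidef_mul_nystromProj hK hG).dotProduct_mulVec_nonneg α
    rw [sub_mulVec, dotProduct_sub]
    linarith
  have htr : 0 ≤ R.trace := hR.trace_nonneg
  have hKδ : 0 ≤ (K *ᵥ (α - S *ᵥ β)) ⬝ᵥ (K *ᵥ (α - S *ᵥ β)) := dotProduct_self_star_nonneg _
  calc lam ^ 2 * ((α - S *ᵥ β) ⬝ᵥ (K *ᵥ (α - S *ᵥ β)))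
      ≤ lam * (R.trace * (α ⬝ᵥ (R *ᵥ α)) + lam * (α ⬝ᵥ (R *ᵥ α))) := by
        rw [sq, mul_assoc]
        gcongr
        linarith [hR.mulVec_dotProduct_mulVec_le_trace_mul α]
    _ = R.trace * (lam * (α ⬝ᵥ (R *ᵥ α))) + lam ^ 2 * (α ⬝ᵥ (R *ᵥ α)) := by ring
    _ ≤ R.trace * (lam * (α ⬝ᵥ (K *ᵥ α))) + lam ^ 2 * (R.trace * (α ⬝ᵥ α)) := by
        gcongr
        exact hR.dotProduct_mulVec_le_trace_mul α
    _ = R.trace * (lam * (α ⬝ᵥ (K *ᵥ α)) + lam ^ 2 * (α ⬝ᵥ α)) := by ring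
    _ ≤ R.trace * (y ⬝ᵥ y) := by
        gcongr
        exact lam_mul_dotProduct_mulVec_add_le_of_ridgeResidual_eq_zero hK hlam hα

lemma Function.extend_zero_eq_submatrix_one_mulVec {ι κ : Type*} [Fintype κ] [DecidableEq ι]
    {e : κ → ι} (he : Function.Injective e) (β : κ → ℝ) :
    Function.extend e β 0 = (1 : Matrix ι ι ℝ).submatrix id e *ᵥ β := by
  classical
  funext i
  by_cases hi : ∃ j, e j = i
  · obtain ⟨j, rfl⟩ := hi
    simp [he.extend_apply, mulVec, dotProduct, one_apply, he.eq_iff]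
  · rw [Function.extend_apply' _ _ _ hi]
    simp [mulVec, dotProduct, one_apply, fun j => Ne.symm (not_exists.mp hi j)]

section Selection

variable {n m : ℕ} (K : Matrix (Fin n) (Fin n) ℝ) (e : Fin m → Fin n)

lemma KXC_eq_mul : KXC K e = K * (1 : Matrix (Fin n) (Fin n) ℝ).submatrix id e :=
  (mul_submatrix_one (Equiv.refl _) e K).symm

lemma KCX_eq_transpose_mul (hK : K.IsSymm) :
    KCX K e = ((1 : Matrix (Fin n) (Fin n) ℝ).submatrix id e)ᵀ * K := by
  rw [KCX, KXC_eq_mul, transpose_mul, hK.eq]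

lemma KCC_eq_transpose_mul_mul :
    KCC K e = ((1 : Matrix (Fin n) (Fin n) ℝ).submatrix id e)ᵀ * K *
      (1 : Matrix (Fin n) (Fin n) ℝ).submatrix id e := by
  rw [Matrix.mul_assoc, ← KXC_eq_mul, KXC, transpose_submatrix, transpose_one]
  exact (one_submatrix_mul e (Equiv.refl _) (K.submatrix id e)).symm

lemma nystrom_eq_mul_nystromProj (hK : K.IsSymm) :
    nystrom K e = K * nystromProj K ((1 : Matrix (Fin n) (Fin n) ℝ).submatrix id e) := by
  rw [nystrom, nystromProj, KXC_eq_mul, KCX_eq_transpose_mul K e hK, KCC_eq_transpose_mul_mul]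
  simp only [Matrix.mul_assoc]

end Selection

/-- (Matrix form of Theorem 4.1.) For a real symmetric positive definite
matrix `K`, `λ > 0`, data `y`, and injective control indices `e`, the difference `δ` between
the kernel ridge regression coefficients `α = (K + λI)⁻¹ y` (extended form) and the Nyström
KRR coefficients `β = (K_CX K_XC + λ K_CC)⁻¹ K_CX y` extended by zero satisfies
`δᵀ K δ ≤ 2 · tr(K − Q) · ‖y‖² / λ²`. -/
theorem krr_nystrom_error_le_trace {n m : ℕ}
    (K : Matrix (Fin n) (Fin n) ℝ) (hK : K.PosDef)
    (lam : ℝ) (hlam : 0 < lam) (y : Fin n → ℝ)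
    (e : Fin m → Fin n) (he : Function.Injective e) :
    let α := (K + lam • (1 : Matrix (Fin n) (Fin n) ℝ))⁻¹ *ᵥ y
    let β := (KCX K e * KXC K e + lam • KCC K e)⁻¹ *ᵥ (KCX K e *ᵥ y)
    let δ := α - Function.extend e β 0
    δ ⬝ᵥ (K *ᵥ δ) ≤ 2 * (K - nystrom K e).trace * (y ⬝ᵥ y) / lam ^ 2 := by
  intro α β δ
  set S := (1 : Matrix (Fin n) (Fin n) ℝ).submatrix id e
  have hKsymm : K.IsSymm := isHermitian_iff_isSymm.mp hK.isHermitian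
  have hG : (Sᵀ * K * S).PosDef := KCC_eq_transpose_mul_mul K e ▸ hK.submatrix he
  have hα : ridgeResidual K lam y α = 0 :=
    ridgeResidual_inv_mulVec (hK.add_posSemidef (PosSemidef.one.smul hlam.le)).det_pos.ne'.isUnit
  have hβ : Sᵀ *ᵥ (K *ᵥ ridgeResidual K lam y (S *ᵥ β)) = 0 := by
    simp only [β, KCX_eq_transpose_mul K e hKsymm, KXC_eq_mul, KCC_eq_transpose_mul_mul]
    exact transpose_mulVec_mulVec_ridgeResidual_eq_zero
      (posDef_transpose_mul_mul_add_smul hK.posSemidef hG hlam).det_pos.ne'.isUnit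
  have hδ : δ = α - S *ᵥ β := by rw [← Function.extend_zero_eq_submatrix_one_mulVec he]
  have hbound := sketched_ridge_error_le_trace hK.posSemidef hG.det_pos.ne'.isUnit hlam.le hα hβ
  have htr := (posSemidef_sub_mul_nystromProj hK.posSemidef hG.det_pos.ne'.isUnit).trace_nonneg
  rw [← hδ, ← nystrom_eq_mul_nystromProj K e hKsymm] at hbound
  rw [← nystrom_eq_mul_nystromProj K e hKsymm] at htr
  have hY : 0 ≤ y ⬝ᵥ y := dotProduct_self_star_nonneg y
  rw [le_div_iff₀ (by positivity)]
  nlinarith [mul_nonneg htr hY]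
end

section
/- Let K be a real symmetric positive definite n×n matrix, let e : Fin m → Fin n be injective, with K_CC := K∘(e,e), K_XC := K∘(id,e), K_CX := (K_XC)ᵀ, and Q := K_XC K_CC⁻¹ K_CX. For α ∈ ℝⁿ, set β := K_CC⁻¹ K_CX α and δ := α − ι(β), where ι extends β by zero (placing βⱼ at index e(j)). Then δᵀ K δ = αᵀ (K − Q) α. -/
open Matrix

/-!
Extension by zero along `e` is the column selection `ι`, with `ιᵀ K ι = K_CC` and, for symmetric
`K`, `ιᵀ K = K_CX`. Expanding the quadratic form gives
`δᵀ K δ = αᵀ K α - 2 βᵀ K_CX α + βᵀ K_CC β`, and the normal equations `K_CC β = K_CX α` collapse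
this to `αᵀ K α - βᵀ K_CX α = αᵀ (K - Q) α`.
-/

open Function

namespace Matrix

variable {R ι κ : Type*} [CommSemiring R] [Fintype ι] [Fintype κ] {e : κ → ι}

theorem extend_zero_dotProduct (he : Injective e) (β : κ → R) (w : ι → R) :
    extend e β 0 ⬝ᵥ w = β ⬝ᵥ (w ∘ e) := by
  refine (Fintype.sum_of_injective e he _ _ (fun i hi => ?_) fun j => ?_).symm
  · rw [extend_apply' _ _ _ fun ⟨j, hj⟩ => hi ⟨j, hj⟩, Pi.zero_apply, zero_mul]
  · rw [he.extend_apply]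
    rfl

theorem mulVec_extend_zero (he : Injective e) (A : Matrix ι ι R) (β : κ → R) :
    A *ᵥ extend e β 0 = A.submatrix id e *ᵥ β := by
  ext i
  rw [mulVec, dotProduct_comm, extend_zero_dotProduct he, dotProduct_comm]
  rfl

end Matrix

section Nystrom

variable {n m : ℕ} {K : Matrix (Fin n) (Fin n) ℝ} {e : Fin m → Fin n}

theorem KCX_eq_submatrix (hK : K.IsSymm) : KCX K e = K.submatrix e id := by
  rw [KCX, KXC, transpose_submatrix, hK.eq]

theorem dotProduct_KXC_mulVec (α : Fin n → ℝ) (β : Fin m → ℝ) :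
    α ⬝ᵥ (KXC K e *ᵥ β) = β ⬝ᵥ (KCX K e *ᵥ α) := by
  rw [KCX, mulVec_transpose, dotProduct_mulVec, dotProduct_comm]

theorem dotProduct_nystrom_mulVec (α : Fin n → ℝ) :
    α ⬝ᵥ (nystrom K e *ᵥ α) =
      ((KCC K e)⁻¹ *ᵥ (KCX K e *ᵥ α)) ⬝ᵥ (KCX K e *ᵥ α) := by
  rw [nystrom, ← mulVec_mulVec, ← mulVec_mulVec, dotProduct_KXC_mulVec]

theorem dotProduct_mulVec_sub_extend_zero (hK : K.IsSymm) (he : Injective e)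
    (α : Fin n → ℝ) (β : Fin m → ℝ) :
    (α - extend e β 0) ⬝ᵥ (K *ᵥ (α - extend e β 0)) =
      α ⬝ᵥ (K *ᵥ α) - 2 * β ⬝ᵥ (KCX K e *ᵥ α) + β ⬝ᵥ (KCC K e *ᵥ β) := by
  have cross : extend e β 0 ⬝ᵥ (K *ᵥ α) = β ⬝ᵥ (KCX K e *ᵥ α) := by
    rw [extend_zero_dotProduct he, KCX_eq_submatrix hK]
    rfl
  have diag : extend e β 0 ⬝ᵥ (KXC K e *ᵥ β) = β ⬝ᵥ (KCC K e *ᵥ β) :=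
    extend_zero_dotProduct he β _
  rw [mulVec_sub, mulVec_extend_zero he, ← KXC, sub_dotProduct, dotProduct_sub,
    dotProduct_sub, dotProduct_KXC_mulVec, cross, diag]
  ring

end Nystrom

/-- For a real symmetric positive definite matrix `K`, injective control
indices `e` and weights `α`, the projection residual `δ = α − ι(K_CC⁻¹ K_CX α)` (extension
by zero along `e`) satisfies the exact identity `δᵀ K δ = αᵀ (K − Q) α`, where `Q` is the
Nyström approximation of `K`. -/
theorem projection_residual_eq_nystrom_quadratic {n m : ℕ}
    (K : Matrix (Fin n) (Fin n) ℝ) (hK : K.PosDef)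
    (e : Fin m → Fin n) (he : Function.Injective e)
    (α : Fin n → ℝ) :
    let β := (KCC K e)⁻¹ *ᵥ (KCX K e *ᵥ α)
    let δ := α - Function.extend e β 0
    δ ⬝ᵥ (K *ᵥ δ) = α ⬝ᵥ ((K - nystrom K e) *ᵥ α) := by
  intro β δ
  have hKCC : (KCC K e).PosDef := hK.submatrix he
  have hβ : KCC K e *ᵥ β = KCX K e *ᵥ α := by
    rw [mulVec_mulVec, mul_nonsing_inv _ hKCC.det_pos.ne'.isUnit, one_mulVec]
  calc δ ⬝ᵥ (K *ᵥ δ)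
      = α ⬝ᵥ (K *ᵥ α) - 2 * β ⬝ᵥ (KCX K e *ᵥ α) + β ⬝ᵥ (KCC K e *ᵥ β) :=
        dotProduct_mulVec_sub_extend_zero (isHermitian_iff_isSymm.mp hK.1) he α β
    _ = α ⬝ᵥ (K *ᵥ α) - β ⬝ᵥ (KCX K e *ᵥ α) := by rw [hβ]; ring
    _ = α ⬝ᵥ ((K - nystrom K e) *ᵥ α) := by
        rw [sub_mulVec, dotProduct_sub, dotProduct_nystrom_mulVec]
end

section
/- Let K be a real symmetric positive definite n×n matrix and let 1 ≤ m < n. For a subset S ⊆ {1,…,n} with |S| = m, let K_S denote the principal submatrix of K on S, and let Q_S := K_{XS} K_S⁻¹ K_{SX} be the Nyström approximation based on S. Let λ₁ ≥ λ₂ ≥ … ≥ λₙ denote the eigenvalues of K in decreasing order. Then Σ_{S : |S|=m} det(K_S) · ‖K − Q_S‖₂ ≤ Σ_{S : |S|=m} det(K_S) · tr(K − Q_S) ≤ (m+1) · (Σ_{i=m+1}^{n} λᵢ) · Σ_{S : |S|=m} det(K_S). -/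
open Matrix

noncomputable section

/-- The principal submatrix `K_S` of `K` on the index set `S`. -/
def principalSub {n : ℕ} (K : Matrix (Fin n) (Fin n) ℝ) (S : Finset (Fin n)) :
    Matrix ↥S ↥S ℝ :=
  K.submatrix (fun i : ↥S => (i : Fin n)) (fun i : ↥S => (i : Fin n))

/-- The Nyström approximation `Q_S = K_{XS} ⬝ K_S⁻¹ ⬝ K_{SX}` of `K` based on the
control-index set `S`. -/
def nystromS {n : ℕ} (K : Matrix (Fin n) (Fin n) ℝ) (S : Finset (Fin n)) :
    Matrix (Fin n) (Fin n) ℝ :=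
  K.submatrix id (fun i : ↥S => (i : Fin n)) * (principalSub K S)⁻¹ *
    (K.submatrix id (fun i : ↥S => (i : Fin n)))ᵀ

end

/-!
By the Schur complement formula, `det K_S * (K - Q_S)ᵢᵢ = det K_{S ∪ {i}}` for `i ∉ S`, while the
diagonal of `K - Q_S` vanishes on `S`. Hence `det K_S * tr (K - Q_S)` is the sum of the principal
minors of size `m + 1` containing `S`, and summing over `S` counts every such minor `m + 1` times.
The sum of the principal minors of size `k` is the elementary symmetric polynomial `e_k` of the
eigenvalues, and `e_{m+1}(λ) ≤ (∑_{i ≥ m} λᵢ) e_m(λ)` for nonnegative `λ`. The spectral norm of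
the positive semidefinite matrix `K - Q_S` is at most its trace.
-/

open Finset
open scoped ComplexOrder

namespace Matrix

open scoped Matrix.Norms.L2Operator in
lemma PosSemidef.l2_opNorm_le_trace {n : Type*} [Fintype n] [DecidableEq n] {A : Matrix n n ℝ}
    (hA : A.PosSemidef) : ‖A‖ ≤ A.trace := by
  cases isEmpty_or_nonempty n
  · simp [Subsingleton.elim A 0]
  obtain ⟨x, hx, hxA⟩ := (IsometricContinuousFunctionalCalculus.isGreatest_norm_spectrum
    (𝕜 := ℝ) A hA.1.isSelfAdjoint).1
  rw [hA.1.spectrum_real_eq_range_eigenvalues] at hx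
  obtain ⟨j, rfl⟩ := hx
  rw [← hxA, hA.1.trace_eq_sum_eigenvalues]
  dsimp only
  rw [Real.norm_of_nonneg (hA.eigenvalues_nonneg j)]
  exact single_le_sum (fun i _ => hA.eigenvalues_nonneg i) (mem_univ j)

/-- The restriction of `M` along `Sum.elim e id` is the block matrix `[[M_ee, M_e·], [M_·e, M]]`;
it is positive semidefinite, and the claim is positivity of its Schur complement. -/
lemma PosSemidef.sub_submatrix_mul_inv_mul_conjTranspose {n m 𝕜 : Type*} [Fintype n]
    [Fintype m] [DecidableEq m] [RCLike 𝕜] {M : Matrix n n 𝕜} (hM : M.PosSemidef) {e : m → n}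
    (he : (M.submatrix e e).PosDef) :
    (M - M.submatrix id e * (M.submatrix e e)⁻¹ * (M.submatrix id e)ᴴ).PosSemidef := by
  have := he.isUnit.invertible
  have hblocks : M.submatrix (Sum.elim e id) (Sum.elim e id) =
      fromBlocks (M.submatrix e e) (M.submatrix id e)ᴴ (M.submatrix id e) M := by
    rw [conjTranspose_submatrix, hM.1.eq]
    ext (i | i) (j | j) <;> rfl
  have schur := (PosDef.fromBlocks₁₁ (M.submatrix id e)ᴴ M he).mp
  rw [conjTranspose_conjTranspose] at schur
  exact schur (hblocks ▸ hM.submatrix (Sum.elim e id))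

lemma det_submatrix_insert {n α : Type*} [DecidableEq n] [CommRing α] (M : Matrix n n α)
    {S : Finset n} {i : n} (hi : i ∉ S)
    (hS : IsUnit (M.submatrix (Subtype.val : S → n) Subtype.val).det) :
    (M.submatrix (Subtype.val : ↥(insert i S) → n) Subtype.val).det =
      (M.submatrix (Subtype.val : S → n) Subtype.val).det *
        (M - M.submatrix id (Subtype.val : S → n) *
          (M.submatrix (Subtype.val : S → n) Subtype.val)⁻¹ *
          M.submatrix (Subtype.val : S → n) id : Matrix n n α) i i := by
  let e : ↥(insert i S) ≃ S ⊕ Unit :=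
    (subtypeInsertEquivOption hi).trans (Equiv.optionEquivSumPUnit _)
  have := invertibleOfIsUnitDet _ hS
  have hblocks : (M.submatrix (Subtype.val : ↥(insert i S) → n) Subtype.val).submatrix
      e.symm e.symm = fromBlocks (M.submatrix Subtype.val Subtype.val)
        (M.submatrix Subtype.val fun _ : Unit => i)
        (M.submatrix (fun _ : Unit => i) Subtype.val) (M.submatrix (fun _ => i) fun _ => i) := by
    ext (a | a) (b | b) <;> rfl
  rw [← det_submatrix_equiv_self e.symm, hblocks, det_fromBlocks₁₁, det_unique (n := Unit),
    invOf_eq_nonsing_inv]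
  rfl

lemma IsHermitian.sum_principal_minors_eq_esymm_eigenvalues {n 𝕜 : Type*} [Fintype n]
    [DecidableEq n] [RCLike 𝕜] {A : Matrix n n 𝕜} (hA : A.IsHermitian) (k : ℕ) :
    ∑ s ∈ univ.powersetCard k, (A.submatrix (Subtype.val : s → n) Subtype.val).det =
      ∑ s ∈ univ.powersetCard k, ∏ i ∈ s, (hA.eigenvalues i : 𝕜) := by
  by_cases hk : k ≤ Fintype.card n
  · have vieta := Multiset.prod_X_sub_C_coeff (univ.val.map fun i => (hA.eigenvalues i : 𝕜))
      (k := Fintype.card n - k) (by simp)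
    have minors := A.charpoly_coeff_eq_sum_minors k hk
    simp only [Multiset.map_map, Function.comp_def, Multiset.card_map, card_val, card_univ,
      Nat.sub_sub_self hk, Finset.esymm_map_val] at vieta
    rw [hA.charpoly_eq, Finset.prod_eq_multiset_prod, vieta] at minors
    exact (mul_left_cancel₀ (pow_ne_zero k (neg_ne_zero.mpr one_ne_zero)) minors).symm
  · rw [powersetCard_eq_empty.mpr (by simpa using hk), sum_empty, sum_empty]

end Matrix

lemma Finset.sum_powersetCard_prod_comp_perm {ι R : Type*} [Fintype ι] [CommSemiring R]
    (f : ι → R) (σ : Equiv.Perm ι) (k : ℕ) :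
    ∑ s ∈ univ.powersetCard k, ∏ i ∈ s, f (σ i) = ∑ s ∈ univ.powersetCard k, ∏ i ∈ s, f i := by
  rw [← Finset.esymm_map_val, ← Finset.esymm_map_val, ← Function.comp_def, ← Multiset.map_map,
    Multiset.map_univ_val_equiv]

lemma Finset.sum_powersetCard_sum_compl_insert {α β : Type*} [Fintype α] [DecidableEq α]
    [AddCommMonoid β] (f : Finset α → β) (m : ℕ) :
    ∑ S ∈ univ.powersetCard m, ∑ i ∈ Sᶜ, f (insert i S) =
      (m + 1) • ∑ T ∈ univ.powersetCard (m + 1), f T := by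
  calc ∑ S ∈ univ.powersetCard m, ∑ i ∈ Sᶜ, f (insert i S)
      = ∑ p ∈ (univ.powersetCard m).sigma (·ᶜ), f (insert p.2 p.1) :=
        (sum_sigma _ (·ᶜ) fun p => f (insert p.2 p.1)).symm
    _ = ∑ q ∈ (univ.powersetCard (m + 1)).sigma id, f q.1 := by
      refine sum_nbij' (fun p => ⟨insert p.2 p.1, p.2⟩) (fun q => ⟨q.1.erase q.2, q.2⟩)
        ?_ ?_ ?_ ?_ fun _ _ => rfl
      · rintro ⟨S, i⟩ hp
        simp only [mem_sigma, mem_powersetCard_univ, mem_compl, id] at hp ⊢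
        exact ⟨by rw [card_insert_of_notMem hp.2, hp.1], mem_insert_self _ _⟩
      · rintro ⟨T, i⟩ hq
        simp only [mem_sigma, mem_powersetCard_univ, mem_compl, id] at hq ⊢
        exact ⟨by rw [card_erase_of_mem hq.2, hq.1, Nat.add_sub_cancel], notMem_erase _ _⟩
      · rintro ⟨S, i⟩ hp
        simp only [mem_sigma, mem_compl] at hp
        simp [erase_insert hp.2]
      · rintro ⟨T, i⟩ hq
        simp only [mem_sigma, id] at hq
        simp [insert_erase hq.2]
    _ = ∑ T ∈ univ.powersetCard (m + 1), ∑ _i ∈ T, f T := sum_sigma _ id fun q => f q.1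
    _ = (m + 1) • ∑ T ∈ univ.powersetCard (m + 1), f T := by
      rw [smul_sum]
      refine sum_congr rfl fun T hT => ?_
      rw [sum_const, mem_powersetCard_univ.mp hT]

lemma Fin.card_le_val_max'_succ {n : ℕ} (T : Finset (Fin n)) (hT : T.Nonempty) :
    #T ≤ T.max' hT + 1 := by
  rw [← Fin.card_Iic]
  exact card_le_card fun s hs => mem_Iic.mpr (T.le_max' s hs)

/-- Splitting off its largest element `j`, which satisfies `m ≤ j`, injects the `(m + 1)`-subsets
into the pairs `(j, S)` with `#S = m`. -/
lemma Fin.sum_powersetCard_succ_prod_le {R : Type*} [CommSemiring R] [PartialOrder R]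
    [IsOrderedRing R] {n m : ℕ} {f : Fin n → R} (hf : ∀ i, 0 ≤ f i) :
    ∑ T ∈ univ.powersetCard (m + 1), ∏ i ∈ T, f i ≤
      (∑ i ∈ univ.filter (fun i : Fin n => m ≤ (i : ℕ)), f i) *
        ∑ S ∈ univ.powersetCard m, ∏ i ∈ S, f i := by
  set pairs := (univ.filter (fun i : Fin n => m ≤ (i : ℕ)) ×ˢ univ.powersetCard m).filter
    fun p => ∀ s ∈ p.2, s < p.1
  have hnotMem : ∀ p ∈ pairs, p.1 ∉ p.2 := fun p hp hmem =>
    lt_irrefl _ ((mem_filter.mp hp).2 _ hmem)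
  calc ∑ T ∈ univ.powersetCard (m + 1), ∏ i ∈ T, f i
      = ∑ p ∈ pairs, f p.1 * ∏ i ∈ p.2, f i := by
        refine (sum_nbij (fun p => insert p.1 p.2) ?_ ?_ ?_ ?_).symm
        · intro p hp
          rw [mem_powersetCard_univ, card_insert_of_notMem (hnotMem p hp)]
          simp only [pairs, mem_filter, mem_product, mem_powersetCard_univ] at hp
          rw [hp.1.2]
        · have hle : ∀ p ∈ pairs, ∀ q ∈ pairs, insert p.1 p.2 = insert q.1 q.2 → p.1 ≤ q.1 := by
            intro p _ q hq h
            rcases mem_insert.mp (h ▸ mem_insert_self p.1 p.2) with h' | h'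
            · exact h'.le
            · exact ((mem_filter.mp hq).2 _ h').le
          intro p hp q hq h
          have hfst : p.1 = q.1 := le_antisymm (hle p hp q hq h) (hle q hq p hp h.symm)
          have hsnd : p.2 = q.2 := by
            have h' : insert p.1 p.2 = insert q.1 q.2 := h
            rw [← erase_insert (hnotMem p hp), ← erase_insert (hnotMem q hq), h', hfst]
          exact Prod.ext hfst hsnd
        · intro T hT
          have hcard : #T = m + 1 := mem_powersetCard_univ.mp hT
          have hne : T.Nonempty := card_pos.mp (by omega)
          have hmax := T.max'_mem hne
          refine ⟨(T.max' hne, T.erase (T.max' hne)), ?_, insert_erase hmax⟩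
          have hm := Fin.card_le_val_max'_succ T hne
          rw [hcard] at hm
          simp only [pairs, coe_filter, mem_product, mem_filter, mem_univ, true_and,
            mem_powersetCard_univ, Set.mem_ofPred_eq, card_erase_of_mem hmax, hcard]
          exact ⟨⟨by omega, rfl⟩, fun s hs =>
            (T.le_max' s (mem_of_mem_erase hs)).lt_of_ne (ne_of_mem_erase hs)⟩
        · intro p hp
          exact (prod_insert (hnotMem p hp)).symm
    _ ≤ ∑ p ∈ univ.filter (fun i : Fin n => m ≤ (i : ℕ)) ×ˢ univ.powersetCard m,
          f p.1 * ∏ i ∈ p.2, f i :=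
        sum_le_sum_of_subset_of_nonneg (filter_subset _ _) fun p _ _ =>
          mul_nonneg (hf _) (prod_nonneg fun i _ => hf i)
    _ = _ := by rw [sum_product, sum_mul_sum]

section Nystrom

variable {n : ℕ} {K : Matrix (Fin n) (Fin n) ℝ}

lemma principalSub_posDef (hK : K.PosDef) (S : Finset (Fin n)) : (principalSub K S).PosDef :=
  hK.submatrix Subtype.val_injective

lemma nystromS_eq_mul_inv_mul_conjTranspose (K : Matrix (Fin n) (Fin n) ℝ) (S : Finset (Fin n)) :
    nystromS K S = K.submatrix id (Subtype.val : S → Fin n) * (principalSub K S)⁻¹ *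
      (K.submatrix id (Subtype.val : S → Fin n))ᴴ := by
  rw [conjTranspose_eq_transpose_of_trivial]
  rfl

lemma conjTranspose_submatrix_id_val (hK : K.PosDef) (S : Finset (Fin n)) :
    (K.submatrix id (Subtype.val : S → Fin n))ᴴ = K.submatrix Subtype.val id := by
  rw [conjTranspose_submatrix, hK.1.eq]

lemma posSemidef_sub_nystromS (hK : K.PosDef) (S : Finset (Fin n)) :
    (K - nystromS K S).PosSemidef := by
  rw [nystromS_eq_mul_inv_mul_conjTranspose]
  exact hK.posSemidef.sub_submatrix_mul_inv_mul_conjTranspose (principalSub_posDef hK S)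

lemma nystromS_submatrix_val_id (hK : K.PosDef) (S : Finset (Fin n)) :
    (nystromS K S).submatrix (Subtype.val : S → Fin n) id = K.submatrix Subtype.val id := by
  have hinv : principalSub K S * (principalSub K S)⁻¹ = 1 :=
    mul_nonsing_inv _ (principalSub_posDef hK S).det_pos.ne'.isUnit
  rw [nystromS_eq_mul_inv_mul_conjTranspose, submatrix_mul _ _ _ id _ Function.bijective_id,
    submatrix_mul _ _ _ id _ Function.bijective_id, submatrix_submatrix, submatrix_id_id,
    submatrix_id_id, conjTranspose_submatrix_id_val hK]
  exact (congrArg (· * _) hinv).trans (Matrix.one_mul _)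

lemma sub_nystromS_apply_of_mem (hK : K.PosDef) {S : Finset (Fin n)} {i : Fin n} (hi : i ∈ S)
    (j : Fin n) : (K - nystromS K S) i j = 0 := by
  rw [Matrix.sub_apply, sub_eq_zero]
  exact (congrFun (congrFun (nystromS_submatrix_val_id hK S) ⟨i, hi⟩) j).symm

lemma det_principalSub_insert (hK : K.PosDef) {S : Finset (Fin n)} {i : Fin n} (hi : i ∉ S) :
    (principalSub K (insert i S)).det = (principalSub K S).det * (K - nystromS K S) i i := by
  rw [nystromS_eq_mul_inv_mul_conjTranspose, conjTranspose_submatrix_id_val hK]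
  exact det_submatrix_insert K hi (principalSub_posDef hK S).det_pos.ne'.isUnit

lemma det_mul_trace_sub_nystromS (hK : K.PosDef) (S : Finset (Fin n)) :
    (principalSub K S).det * (K - nystromS K S).trace =
      ∑ i ∈ Sᶜ, (principalSub K (insert i S)).det := by
  simp only [trace, diag_apply]
  rw [← sum_compl_add_sum S, sum_eq_zero fun i hi => sub_nystromS_apply_of_mem hK hi i,
    add_zero, mul_sum]
  exact sum_congr rfl fun i hi => (det_principalSub_insert hK (mem_compl.mp hi)).symm

end Nystrom

theorem dpp_nystrom_error_bound_general {n m : ℕ}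
    (K : Matrix (Fin n) (Fin n) ℝ) (hK : K.PosDef)
    (lam : Fin n → ℝ)
    (heig : ∃ σ : Equiv.Perm (Fin n), ∀ i, lam i = hK.1.eigenvalues (σ i)) :
    (∑ S ∈ Finset.powersetCard m (Finset.univ : Finset (Fin n)),
        (principalSub K S).det * ‖Matrix.toEuclideanCLM (𝕜 := ℝ) (K - nystromS K S)‖
      ≤ ∑ S ∈ Finset.powersetCard m (Finset.univ : Finset (Fin n)),
          (principalSub K S).det * (K - nystromS K S).trace) ∧
    (∑ S ∈ Finset.powersetCard m (Finset.univ : Finset (Fin n)),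
          (principalSub K S).det * (K - nystromS K S).trace
      ≤ ((m : ℝ) + 1) * (∑ i ∈ Finset.univ.filter (fun i : Fin n => m ≤ (i : ℕ)), lam i) *
          ∑ S ∈ Finset.powersetCard m (Finset.univ : Finset (Fin n)),
            (principalSub K S).det) := by
  obtain ⟨σ, hσ⟩ := heig
  have hlam : ∀ i, 0 ≤ lam i := fun i => hσ i ▸ hK.posSemidef.eigenvalues_nonneg _
  have hminors : ∀ k, ∑ S ∈ univ.powersetCard k, (principalSub K S).det =
      ∑ S ∈ univ.powersetCard k, ∏ i ∈ S, lam i := fun k => by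
    simp only [hσ, sum_powersetCard_prod_comp_perm]
    have minors := hK.1.sum_principal_minors_eq_esymm_eigenvalues k
    simp only [RCLike.ofReal_real_eq_id, id] at minors
    exact minors
  refine ⟨sum_le_sum fun S _ => mul_le_mul_of_nonneg_left
    (posSemidef_sub_nystromS hK S).l2_opNorm_le_trace (principalSub_posDef hK S).det_pos.le, ?_⟩
  calc ∑ S ∈ univ.powersetCard m, (principalSub K S).det * (K - nystromS K S).trace
      = ∑ S ∈ univ.powersetCard m, ∑ i ∈ Sᶜ, (principalSub K (insert i S)).det :=
        sum_congr rfl fun S _ => det_mul_trace_sub_nystromS hK S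
    _ = (m + 1) * ∑ T ∈ univ.powersetCard (m + 1), ∏ i ∈ T, lam i := by
        rw [sum_powersetCard_sum_compl_insert fun T => (principalSub K T).det, hminors,
          nsmul_eq_mul, Nat.cast_succ]
    _ ≤ (m + 1) * ((∑ i ∈ univ.filter (fun i : Fin n => m ≤ (i : ℕ)), lam i) *
          ∑ S ∈ univ.powersetCard m, ∏ i ∈ S, lam i) := by
        gcongr
        exact Fin.sum_powersetCard_succ_prod_le hlam
    _ = _ := by rw [hminors, mul_assoc]

/-- (Theorem 4.2, unnormalized m-DPP bound.) Let `K` be real symmetric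
positive definite, `1 ≤ m < n`, and let `λ₁ ≥ … ≥ λₙ` be the eigenvalues of `K` in
decreasing order (`lam` is a sorted rearrangement of the eigenvalues of `K`). Then
`∑_{|S|=m} det(K_S) ‖K − Q_S‖₂ ≤ ∑_{|S|=m} det(K_S) tr(K − Q_S)
  ≤ (m+1) (∑_{i=m+1}^n λᵢ) ∑_{|S|=m} det(K_S)`. -/
theorem dpp_nystrom_error_bound {n m : ℕ} (hm : 1 ≤ m) (hmn : m < n)
    (K : Matrix (Fin n) (Fin n) ℝ) (hK : K.PosDef)
    (lam : Fin n → ℝ)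
    (hsorted : ∀ i j : Fin n, i ≤ j → lam j ≤ lam i)
    (heig : ∃ σ : Equiv.Perm (Fin n), ∀ i, lam i = hK.1.eigenvalues (σ i)) :
    (∑ S ∈ Finset.powersetCard m (Finset.univ : Finset (Fin n)),
        (principalSub K S).det * ‖Matrix.toEuclideanCLM (𝕜 := ℝ) (K - nystromS K S)‖
      ≤ ∑ S ∈ Finset.powersetCard m (Finset.univ : Finset (Fin n)),
          (principalSub K S).det * (K - nystromS K S).trace) ∧
    (∑ S ∈ Finset.powersetCard m (Finset.univ : Finset (Fin n)),
          (principalSub K S).det * (K - nystromS K S).trace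
      ≤ ((m : ℝ) + 1) * (∑ i ∈ Finset.univ.filter (fun i : Fin n => m ≤ (i : ℕ)), lam i) *
          ∑ S ∈ Finset.powersetCard m (Finset.univ : Finset (Fin n)),
            (principalSub K S).det) :=
  dpp_nystrom_error_bound_general K hK lam heig
end

section
/- Let K be a real symmetric positive definite n×n matrix, let e : Fin m → Fin n be injective, and let Q := K_XC K_CC⁻¹ K_CX be the Nyström approximation (K_CC := K∘(e,e), K_XC := K∘(id,e), K_CX := (K_XC)ᵀ). Then for every α ∈ ℝⁿ, setting β := K_CC⁻¹ K_CX α and δ := α − ι(β) (ι the extension by zero along e), one has δᵀ K δ ≤ ‖α‖² · tr(K − Q). -/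
open Matrix

/-!
With `S` the selection matrix of the control indices, `K_XC = K S`, `K_CC = Sᴴ K S`,
`K_CX = Sᴴ K` and `ι β = S β`. The coefficients `β` solve the normal equations
`Sᴴ K (α - S β) = 0`, so the residual `δ = α - S β` is `K`-orthogonal to the range of `S` and
`δᴴ K δ = αᴴ K δ = αᴴ (K - Q) α`. As this holds for every `α`, `K - Q` is positive semidefinite;
writing `K - Q = Bᴴ B`, Cauchy–Schwarz on each row of `B` gives
`αᴴ (K - Q) α = ‖B α‖² ≤ ‖α‖² ∑ᵢⱼ Bᵢⱼ² = ‖α‖² tr (K - Q)`.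
-/

namespace Matrix

variable {ι κ R : Type*}

section Compression

variable [Fintype ι] [Fintype κ] [CommRing R] [StarRing R]

theorem star_sub_dotProduct_mulVec_sub_of_orthogonal (K : Matrix ι ι R) (P : Matrix ι κ R)
    {α : ι → R} {β : κ → R} (horth : Pᴴ *ᵥ (K *ᵥ (α - P *ᵥ β)) = 0) :
    star (α - P *ᵥ β) ⬝ᵥ (K *ᵥ (α - P *ᵥ β)) = star α ⬝ᵥ (K *ᵥ (α - P *ᵥ β)) := by
  rw [star_sub, sub_dotProduct, star_mulVec, ← dotProduct_mulVec, horth, dotProduct_zero,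
    sub_zero]

variable [DecidableEq κ]

theorem star_sub_dotProduct_mulVec_sub_eq (K : Matrix ι ι R) (P : Matrix ι κ R)
    (hG : IsUnit (Pᴴ * K * P)) (α : ι → R) :
    let β := (Pᴴ * K * P)⁻¹ *ᵥ ((Pᴴ * K) *ᵥ α)
    star (α - P *ᵥ β) ⬝ᵥ (K *ᵥ (α - P *ᵥ β)) =
      star α ⬝ᵥ ((K - K * P * (Pᴴ * K * P)⁻¹ * (Pᴴ * K)) *ᵥ α) := by
  intro β
  have hnormal : Pᴴ *ᵥ (K *ᵥ (P *ᵥ β)) = Pᴴ *ᵥ (K *ᵥ α) := by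
    simp only [β, mulVec_mulVec, ← Matrix.mul_assoc,
      mul_nonsing_inv _ ((isUnit_iff_isUnit_det _).mp hG), Matrix.one_mul]
  have horth : Pᴴ *ᵥ (K *ᵥ (α - P *ᵥ β)) = 0 := by
    rw [mulVec_sub, mulVec_sub, hnormal, sub_self]
  rw [star_sub_dotProduct_mulVec_sub_of_orthogonal K P horth, sub_mulVec, mulVec_sub]
  simp only [β, mulVec_mulVec, Matrix.mul_assoc]

theorem posSemidef_sub_mul_inv_mul [PartialOrder R] {K : Matrix ι ι R} (hK : K.PosSemidef)
    (P : Matrix ι κ R) (hG : IsUnit (Pᴴ * K * P)) :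
    (K - K * P * (Pᴴ * K * P)⁻¹ * (Pᴴ * K)).PosSemidef := by
  have hQ : (K * P * (Pᴴ * K * P)⁻¹ * (Pᴴ * K)).IsHermitian := by
    have h := isHermitian_mul_mul_conjTranspose (K * P)
      (isHermitian_conjTranspose_mul_mul P hK.1).inv
    rwa [conjTranspose_mul, hK.1.eq] at h
  refine .of_dotProduct_mulVec_nonneg (hK.1.sub hQ) fun α => ?_
  rw [← star_sub_dotProduct_mulVec_sub_eq K P hG α]
  exact hK.dotProduct_mulVec_nonneg _

end Compression

theorem PosSemidef.dotProduct_mulVec_le_dotProduct_mul_trace [Fintype ι] {M : Matrix ι ι ℝ}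
    (hM : M.PosSemidef) (v : ι → ℝ) : v ⬝ᵥ (M *ᵥ v) ≤ (v ⬝ᵥ v) * M.trace := by
  classical
  obtain ⟨B, rfl⟩ : ∃ B : Matrix ι ι ℝ, M = star B * B := by
    open scoped MatrixOrder Matrix.Norms.L2Operator in
    exact CStarAlgebra.nonneg_iff_eq_star_mul_self.mp hM.nonneg
  calc v ⬝ᵥ ((star B * B) *ᵥ v) = ∑ i, (B i ⬝ᵥ v) ^ 2 := by
        rw [← mulVec_mulVec, dotProduct_mulVec, star_eq_conjTranspose, vecMul_conjTranspose]
        simp only [dotProduct, mulVec, sq, star_trivial]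
    _ ≤ ∑ i, (B i ⬝ᵥ B i) * (v ⬝ᵥ v) := Finset.sum_le_sum fun i _ => by
        simpa only [dotProduct, sq] using Finset.sum_mul_sq_le_sq_mul_sq Finset.univ (B i) v
    _ = (v ⬝ᵥ v) * (star B * B).trace := by
        rw [← Finset.sum_mul, mul_comm, trace_mul_comm]
        simp only [trace, diag, mul_apply, star_apply, star_trivial, dotProduct]

section Selection

variable [DecidableEq ι]

def selection (R : Type*) [Zero R] [One R] (e : κ → ι) : Matrix ι κ R :=
  (1 : Matrix ι ι R).submatrix id e

variable [NonAssocSemiring R]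

theorem mul_selection [Fintype ι] {ι' : Type*} (K : Matrix ι' ι R) (e : κ → ι) :
    K * selection R e = K.submatrix id e :=
  mul_submatrix_one (Equiv.refl ι) e K

theorem conjTranspose_selection_mul [Fintype ι] [StarRing R] {ι' : Type*} (K : Matrix ι ι' R)
    (e : κ → ι) : (selection R e)ᴴ * K = K.submatrix e id := by
  rw [selection, conjTranspose_submatrix, conjTranspose_one]
  exact one_submatrix_mul e (Equiv.refl ι) K

theorem selection_mulVec [Fintype κ] {e : κ → ι} (he : Function.Injective e) (β : κ → R) :
    selection R e *ᵥ β = Function.extend e β 0 := by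
  classical
  ext i
  simp only [selection, mulVec, dotProduct, submatrix_apply, id_eq, one_apply, ite_mul, one_mul,
    zero_mul]
  by_cases hi : ∃ k, e k = i
  · obtain ⟨k, rfl⟩ := hi
    simp only [he.eq_iff, Finset.sum_ite_eq, Finset.mem_univ, if_true, he.extend_apply]
  · rw [Function.extend_apply' _ _ _ hi]
    exact Finset.sum_eq_zero fun k _ => if_neg fun h => hi ⟨k, h.symm⟩

end Selection

end Matrix

section Nystrom

variable {n m : ℕ}

theorem KXC_eq_mul_selection (K : Matrix (Fin n) (Fin n) ℝ) (e : Fin m → Fin n) :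
    KXC K e = K * selection ℝ e :=
  (mul_selection K e).symm

theorem KCC_eq_conjTranspose_selection_mul_mul (K : Matrix (Fin n) (Fin n) ℝ)
    (e : Fin m → Fin n) : KCC K e = (selection ℝ e)ᴴ * K * selection ℝ e := by
  rw [conjTranspose_selection_mul, mul_selection, submatrix_submatrix]
  rfl

theorem KCX_eq_conjTranspose_selection_mul {K : Matrix (Fin n) (Fin n) ℝ} (hK : K.IsSymm)
    (e : Fin m → Fin n) : KCX K e = (selection ℝ e)ᴴ * K := by
  rw [conjTranspose_selection_mul, KCX, KXC, transpose_submatrix, hK.eq]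

theorem nystrom_eq_mul_inv_mul {K : Matrix (Fin n) (Fin n) ℝ} (hK : K.IsSymm)
    (e : Fin m → Fin n) :
    nystrom K e =
      K * selection ℝ e * ((selection ℝ e)ᴴ * K * selection ℝ e)⁻¹ * ((selection ℝ e)ᴴ * K) := by
  rw [nystrom, KXC_eq_mul_selection, KCC_eq_conjTranspose_selection_mul_mul,
    KCX_eq_conjTranspose_selection_mul hK]

end Nystrom

/-- (Per-vector trace bound of Theorem 5.1.) For a real symmetric
positive definite matrix `K`, injective control indices `e` with Nyström approximation
`Q`, and any `α ∈ ℝⁿ`, the projection residual `δ = α − ι(K_CC⁻¹ K_CX α)` (extension by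
zero along `e`) satisfies `δᵀ K δ ≤ ‖α‖² · tr(K − Q)`. -/
theorem projection_residual_le_trace {n m : ℕ}
    (K : Matrix (Fin n) (Fin n) ℝ) (hK : K.PosDef)
    (e : Fin m → Fin n) (he : Function.Injective e)
    (α : Fin n → ℝ) :
    let β := (KCC K e)⁻¹ *ᵥ (KCX K e *ᵥ α)
    let δ := α - Function.extend e β 0
    δ ⬝ᵥ (K *ᵥ δ) ≤ (α ⬝ᵥ α) * (K - nystrom K e).trace := by
  intro β δ
  have hsymm : K.IsSymm := isHermitian_iff_isSymm.mp hK.1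
  have hG : IsUnit ((selection ℝ e)ᴴ * K * selection ℝ e) :=
    KCC_eq_conjTranspose_selection_mul_mul K e ▸ (hK.submatrix he).isUnit
  have hresidual : δ ⬝ᵥ (K *ᵥ δ) = α ⬝ᵥ ((K - nystrom K e) *ᵥ α) := by
    simpa only [δ, β, ← selection_mulVec he, KCC_eq_conjTranspose_selection_mul_mul,
      KCX_eq_conjTranspose_selection_mul hsymm, nystrom_eq_mul_inv_mul hsymm, star_trivial]
      using star_sub_dotProduct_mulVec_sub_eq K (selection ℝ e) hG α
  rw [hresidual]
  exact (nystrom_eq_mul_inv_mul hsymm e ▸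
    posSemidef_sub_mul_inv_mul hK.posSemidef _ hG).dotProduct_mulVec_le_dotProduct_mul_trace α
end
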